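/- arXiv:1212.2257 — 3 statements merged into one kernel-verified Lean document; each statement's English description precedes it below -/
import Mathlib

section
/- For each ⊙ ∈ {□, ∥_A, ∧} and all CLL process terms t1, t2, t3: t1⊙(t2∨t3) =_RS (t1⊙t2)∨(t1⊙t3). -/
namespace CLL

attribute [local instance] Classical.propDecidable

/-- CLL process terms over a set `Act` of visible actions.  The action `τ` is
represented by `none : Option Act`, a visible action `a` by `some a`. -/
inductive Tm (Act : Type) : Type where
  | nil  : Tm Act                            -- 0
  | bot  : Tm Act                            -- ⊥
  | pre  : Option Act → Tm Act → Tm Act      -- α.t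
  | ec   : Tm Act → Tm Act → Tm Act          -- t □ t
  | conj : Tm Act → Tm Act → Tm Act          -- t ∧ t
  | disj : Tm Act → Tm Act → Tm Act          -- t ∨ t
  | par  : Set Act → Tm Act → Tm Act → Tm Act -- t ∥_A t

/-- A transition model: a set of transitions `t →α t'`, of instances `t F` of the
inconsistency predicate, and of instances `t F̄_α` of the auxiliary predicates. -/
structure Model (Act : Type) where
  Tr   : Tm Act → Option Act → Tm Act → Prop
  F    : Tm Act → Prop
  Fbar : Tm Act → Option Act → Prop

variable {Act : Type}

/-- The least transition relation of the positive TSS `Strip(P_CLL, M)`: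
ground instances of transition rules of `P_CLL` whose negative premises
(checked against `M`) hold, with those negative premises removed. -/
inductive STr (M : Model Act) : Tm Act → Option Act → Tm Act → Prop where
  | pre (α : Option Act) (t : Tm Act) : STr M (Tm.pre α t) α t
  | ecL {t1 t2 y1 : Tm Act} {a : Act} :
      STr M t1 (some a) y1 → (∀ y, ¬ M.Tr t2 none y) →
      STr M (Tm.ec t1 t2) (some a) y1
  | ecR {t1 t2 y2 : Tm Act} {a : Act} :
      (∀ y, ¬ M.Tr t1 none y) → STr M t2 (some a) y2 →
      STr M (Tm.ec t1 t2) (some a) y2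
  | ecTauL {t1 t2 y1 : Tm Act} :
      STr M t1 none y1 → STr M (Tm.ec t1 t2) none (Tm.ec y1 t2)
  | ecTauR {t1 t2 y2 : Tm Act} :
      STr M t2 none y2 → STr M (Tm.ec t1 t2) none (Tm.ec t1 y2)
  | conjAct {t1 t2 y1 y2 : Tm Act} {a : Act} :
      STr M t1 (some a) y1 → STr M t2 (some a) y2 →
      STr M (Tm.conj t1 t2) (some a) (Tm.conj y1 y2)
  | conjTauL {t1 t2 y1 : Tm Act} :
      STr M t1 none y1 → STr M (Tm.conj t1 t2) none (Tm.conj y1 t2)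
  | conjTauR {t1 t2 y2 : Tm Act} :
      STr M t2 none y2 → STr M (Tm.conj t1 t2) none (Tm.conj t1 y2)
  | disjL (t1 t2 : Tm Act) : STr M (Tm.disj t1 t2) none t1
  | disjR (t1 t2 : Tm Act) : STr M (Tm.disj t1 t2) none t2
  | parTauL {A : Set Act} {t1 t2 y1 : Tm Act} :
      STr M t1 none y1 → STr M (Tm.par A t1 t2) none (Tm.par A y1 t2)
  | parTauR {A : Set Act} {t1 t2 y2 : Tm Act} :
      STr M t2 none y2 → STr M (Tm.par A t1 t2) none (Tm.par A t1 y2)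
  | parL {A : Set Act} {t1 t2 y1 : Tm Act} {a : Act} :
      STr M t1 (some a) y1 → (∀ y, ¬ M.Tr t2 none y) → a ∉ A →
      STr M (Tm.par A t1 t2) (some a) (Tm.par A y1 t2)
  | parR {A : Set Act} {t1 t2 y2 : Tm Act} {a : Act} :
      (∀ y, ¬ M.Tr t1 none y) → STr M t2 (some a) y2 → a ∉ A →
      STr M (Tm.par A t1 t2) (some a) (Tm.par A t1 y2)
  | parSync {A : Set Act} {t1 t2 y1 y2 : Tm Act} {a : Act} :
      STr M t1 (some a) y1 → STr M t2 (some a) y2 → a ∈ A →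
      STr M (Tm.par A t1 t2) (some a) (Tm.par A y1 y2)

/-- Least model of the `F̄_α` rules of `Strip(P_CLL, M)`. -/
inductive SFbar (M : Model Act) : Tm Act → Option Act → Prop where
  | intro {t1 t2 y : Tm Act} {α : Option Act} :
      STr M (Tm.conj t1 t2) α y → ¬ M.F y → SFbar M (Tm.conj t1 t2) α

/-- Least model of the `F` rules of `Strip(P_CLL, M)`. -/
inductive SF (M : Model Act) : Tm Act → Prop where
  | bot : SF M Tm.bot
  | pre {t : Tm Act} (α : Option Act) : SF M t → SF M (Tm.pre α t)
  | disj {t1 t2 : Tm Act} : SF M t1 → SF M t2 → SF M (Tm.disj t1 t2)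
  | ecL {t1 t2 : Tm Act} : SF M t1 → SF M (Tm.ec t1 t2)
  | ecR {t1 t2 : Tm Act} : SF M t2 → SF M (Tm.ec t1 t2)
  | conjL {t1 t2 : Tm Act} : SF M t1 → SF M (Tm.conj t1 t2)
  | conjR {t1 t2 : Tm Act} : SF M t2 → SF M (Tm.conj t1 t2)
  | parL {A : Set Act} {t1 t2 : Tm Act} : SF M t1 → SF M (Tm.par A t1 t2)
  | parR {A : Set Act} {t1 t2 : Tm Act} : SF M t2 → SF M (Tm.par A t1 t2)
  | conjMisL {t1 t2 y1 : Tm Act} {a : Act} :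
      STr M t1 (some a) y1 → (∀ y, ¬ M.Tr t2 (some a) y) →
      (∀ y, ¬ M.Tr (Tm.conj t1 t2) none y) → SF M (Tm.conj t1 t2)
  | conjMisR {t1 t2 y2 : Tm Act} {a : Act} :
      (∀ y, ¬ M.Tr t1 (some a) y) → STr M t2 (some a) y2 →
      (∀ y, ¬ M.Tr (Tm.conj t1 t2) none y) → SF M (Tm.conj t1 t2)
  | conjDead {t1 t2 z : Tm Act} {α : Option Act} :
      STr M (Tm.conj t1 t2) α z → ¬ M.Fbar (Tm.conj t1 t2) α →
      SF M (Tm.conj t1 t2)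

/-- `M` is a stable transition model of `P_CLL`:  `M` coincides with the least
model of the positive TSS `Strip(P_CLL, M)`. -/
def IsStable (M : Model Act) : Prop :=
  (∀ t α t', M.Tr t α t' ↔ STr M t α t') ∧
  (∀ t, M.F t ↔ SF M t) ∧
  (∀ t α, M.Fbar t α ↔ SFbar M t α)

/-- `t` is stable: it has no τ-transition. -/
def Stable (M : Model Act) (t : Tm Act) : Prop := ∀ t', ¬ M.Tr t none t'

/-- The ready set `I(t)`. -/
def Ready (M : Model Act) (t : Tm Act) : Set (Option Act) :=
  {α | ∃ u, M.Tr t α u}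

/-- One τ-step between consistent terms: `t →τ_F s`. -/
def TauF (M : Model Act) (t s : Tm Act) : Prop :=
  M.Tr t none s ∧ ¬ M.F t ∧ ¬ M.F s

/-- `t ⇒ε_F s`: a sequence of τ-transitions all whose terms (endpoints included)
are consistent. -/
def EpsF (M : Model Act) (t s : Tm Act) : Prop :=
  ¬ M.F t ∧ Relation.ReflTransGen (TauF M) t s

/-- `t ⇒ε_F| s`:  `t ⇒ε_F s` with `s` stable. -/
def EpsFS (M : Model Act) (t s : Tm Act) : Prop :=
  EpsF M t s ∧ Stable M s

/-- `t ⇒α_F s`. -/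
def WeakF (M : Model Act) (α : Option Act) (t s : Tm Act) : Prop :=
  ∃ r p, EpsF M t r ∧ M.Tr r α p ∧ EpsF M p s

/-- `t ⇒α_F| s`. -/
def WeakFS (M : Model Act) (α : Option Act) (t s : Tm Act) : Prop :=
  WeakF M α t s ∧ Stable M s

/-- `R` is a stable ready simulation relation. -/
def IsRS (M : Model Act) (R : Tm Act → Tm Act → Prop) : Prop :=
  ∀ t s, R t s →
    (Stable M t ∧ Stable M s) ∧
    (¬ M.F t → ¬ M.F s) ∧
    (∀ (a : Act) t', WeakFS M (some a) t t' →
      ∃ s', WeakFS M (some a) s s' ∧ R t' s') ∧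
    (¬ M.F t → Ready M t = Ready M s)

/-- `t ⊏̃_RS s`. -/
def RSs (M : Model Act) (t s : Tm Act) : Prop :=
  ∃ R, IsRS M R ∧ R t s

/-- `t ⊑_RS s`. -/
def RSle (M : Model Act) (t s : Tm Act) : Prop :=
  ∀ t', EpsFS M t t' → ∃ s', EpsFS M s s' ∧ RSs M t' s'

/-- `t =_RS s`. -/
def RSeq (M : Model Act) (t s : Tm Act) : Prop :=
  RSle M t s ∧ RSle M s t

/-- The binary operators `□`, `∧` and `∥_A`. -/
def IsStaticOp (Act : Type) (op : Tm Act → Tm Act → Tm Act) : Prop :=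
  op = Tm.ec ∨ op = Tm.conj ∨ ∃ A : Set Act, op = Tm.par A

/-- General external choice `□_{i<n} t_i` over a finite sequence of terms. -/
def bigEC : List (Tm Act) → Tm Act
  | [] => Tm.nil
  | t :: ts => ts.foldl Tm.ec t

/-- General disjunction `⋁_{i<n} t_i` over a finite (nonempty) sequence. -/
def bigDisj : List (Tm Act) → Tm Act
  | [] => Tm.nil
  | t :: ts => ts.foldl Tm.disj t

/-- `□_{i<n} a_i.t_i` for a sequence of prefixed terms given by pairs. -/
def ecPre (l : List (Act × Tm Act)) : Tm Act :=
  bigEC (l.map fun p => Tm.pre (some p.1) p.2)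

/-- The sequence of all `a_i.(t_i ∧ s_j)` with `a_i = b_j`. -/
noncomputable def matched (l1 l2 : List (Act × Tm Act)) : List (Act × Tm Act) :=
  ((l1.product l2).filter fun q => decide (q.1.1 = q.2.1)).map
    fun q => (q.1.1, Tm.conj q.1.2 q.2.2)

/-- The right-hand side `((□Ω1)□(□Ω2))□(□Ω3)` of the expansion law. -/
noncomputable def expRHS (A : Set Act) (l1 l2 : List (Act × Tm Act)) : Tm Act :=
  Tm.ec
    (Tm.ec
      (bigEC ((l1.filter fun p => decide (p.1 ∉ A)).map
        fun p => Tm.pre (some p.1) (Tm.par A p.2 (ecPre l2))))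
      (bigEC ((l2.filter fun q => decide (q.1 ∉ A)).map
        fun q => Tm.pre (some q.1) (Tm.par A (ecPre l1) q.2))))
    (bigEC (((l1.product l2).filter fun q => decide (q.1.1 = q.2.1 ∧ q.1.1 ∈ A)).map
      fun q => Tm.pre (some q.1.1) (Tm.par A q.1.2 q.2.2)))

/-- Basic process terms: built from `0` by prefixing, `∨`, `□` and `∥_A`. -/
inductive Basic : Tm Act → Prop where
  | nil : Basic Tm.nil
  | pre (α : Option Act) {t : Tm Act} : Basic t → Basic (Tm.pre α t)
  | disj {t1 t2 : Tm Act} : Basic t1 → Basic t2 → Basic (Tm.disj t1 t2)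
  | ec {t1 t2 : Tm Act} : Basic t1 → Basic t2 → Basic (Tm.ec t1 t2)
  | par (A : Set Act) {t1 t2 : Tm Act} :
      Basic t1 → Basic t2 → Basic (Tm.par A t1 t2)

/-- Derivability `⊢ t ≤ s` in the axiomatic system `AX_CLL`. -/
inductive Deriv : Tm Act → Tm Act → Prop where
  -- inference rules
  | refl (t : Tm Act) : Deriv t t
  | trans {t u s : Tm Act} : Deriv t u → Deriv u s → Deriv t s
  | pre_mono (α : Option Act) {t s : Tm Act} :
      Deriv t s → Deriv (Tm.pre α t) (Tm.pre α s)
  | ec_mono {t1 s1 t2 s2 : Tm Act} :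
      Deriv t1 s1 → Deriv t2 s2 → Deriv (Tm.ec t1 t2) (Tm.ec s1 s2)
  | conj_mono {t1 s1 t2 s2 : Tm Act} :
      Deriv t1 s1 → Deriv t2 s2 → Deriv (Tm.conj t1 t2) (Tm.conj s1 s2)
  | disj_mono {t1 s1 t2 s2 : Tm Act} :
      Deriv t1 s1 → Deriv t2 s2 → Deriv (Tm.disj t1 t2) (Tm.disj s1 s2)
  | par_mono (A : Set Act) {t1 s1 t2 s2 : Tm Act} :
      Deriv t1 s1 → Deriv t2 s2 → Deriv (Tm.par A t1 t2) (Tm.par A s1 s2)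
  -- EC1–EC5
  | ec_comm (x y : Tm Act) : Deriv (Tm.ec x y) (Tm.ec y x)
  | ec_assoc1 (x y z : Tm Act) : Deriv (Tm.ec (Tm.ec x y) z) (Tm.ec x (Tm.ec y z))
  | ec_assoc2 (x y z : Tm Act) : Deriv (Tm.ec x (Tm.ec y z)) (Tm.ec (Tm.ec x y) z)
  | ec_idem1 (x : Tm Act) : Deriv (Tm.ec x x) x
  | ec_idem2 (x : Tm Act) : Deriv x (Tm.ec x x)
  | ec_nil1 (x : Tm Act) : Deriv (Tm.ec x Tm.nil) x
  | ec_nil2 (x : Tm Act) : Deriv x (Tm.ec x Tm.nil)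
  | ec_bot1 (x : Tm Act) : Deriv (Tm.ec x Tm.bot) Tm.bot
  | ec_bot2 (x : Tm Act) : Deriv Tm.bot (Tm.ec x Tm.bot)
  -- DI1–DI5
  | di_comm (x y : Tm Act) : Deriv (Tm.disj x y) (Tm.disj y x)
  | di_assoc1 (x y z : Tm Act) :
      Deriv (Tm.disj x (Tm.disj y z)) (Tm.disj (Tm.disj x y) z)
  | di_assoc2 (x y z : Tm Act) :
      Deriv (Tm.disj (Tm.disj x y) z) (Tm.disj x (Tm.disj y z))
  | di_idem1 (x : Tm Act) : Deriv (Tm.disj x x) x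
  | di_idem2 (x : Tm Act) : Deriv x (Tm.disj x x)
  | di_bot1 (x : Tm Act) : Deriv (Tm.disj x Tm.bot) x
  | di_bot2 (x : Tm Act) : Deriv x (Tm.disj x Tm.bot)
  | di_le (x y : Tm Act) : Deriv x (Tm.disj x y)
  -- CO1–CO4
  | co_comm (x y : Tm Act) : Deriv (Tm.conj x y) (Tm.conj y x)
  | co_assoc1 (x y z : Tm Act) :
      Deriv (Tm.conj (Tm.conj x y) z) (Tm.conj x (Tm.conj y z))
  | co_assoc2 (x y z : Tm Act) :
      Deriv (Tm.conj x (Tm.conj y z)) (Tm.conj (Tm.conj x y) z)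
  | co_idem1 (x : Tm Act) : Deriv (Tm.conj x x) x
  | co_idem2 (x : Tm Act) : Deriv x (Tm.conj x x)
  | co_bot1 (x : Tm Act) : Deriv (Tm.conj x Tm.bot) Tm.bot
  | co_bot2 (x : Tm Act) : Deriv Tm.bot (Tm.conj x Tm.bot)
  -- DS1–DS4
  | ds1 (x y z : Tm Act) :
      Deriv (Tm.ec x (Tm.disj y z)) (Tm.disj (Tm.ec x y) (Tm.ec x z))
  | ds2 (x y z : Tm Act) :
      Deriv (Tm.conj x (Tm.disj y z)) (Tm.disj (Tm.conj x y) (Tm.conj x z))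
  | ds3 (A : Set Act) (x y z : Tm Act) :
      Deriv (Tm.par A x (Tm.disj y z)) (Tm.disj (Tm.par A x y) (Tm.par A x z))
  | ds4 (a : Act) {x y : Tm Act} : Basic x → Basic y →
      Deriv (Tm.pre (some a) (Tm.disj x y))
            (Tm.ec (Tm.pre (some a) x) (Tm.pre (some a) y))
  -- PR1, PR2
  | pr1a (a : Act) : Deriv (Tm.pre (some a) Tm.bot) Tm.bot
  | pr1b (a : Act) : Deriv Tm.bot (Tm.pre (some a) Tm.bot)
  | pr2a (x : Tm Act) : Deriv (Tm.pre none x) x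
  | pr2b (x : Tm Act) : Deriv x (Tm.pre none x)
  -- PA1, PA2
  | pa_comm (A : Set Act) (x y : Tm Act) : Deriv (Tm.par A x y) (Tm.par A y x)
  | pa_bot1 (A : Set Act) (x : Tm Act) : Deriv (Tm.par A x Tm.bot) Tm.bot
  | pa_bot2 (A : Set Act) (x : Tm Act) : Deriv Tm.bot (Tm.par A x Tm.bot)
  -- ECC1–ECC3
  | ecc1a (l1 l2 : List (Act × Tm Act)) :
      ({a | a ∈ l1.map Prod.fst} : Set Act) ≠ {a | a ∈ l2.map Prod.fst} →
      Deriv (Tm.conj (ecPre l1) (ecPre l2)) Tm.bot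
  | ecc1b (l1 l2 : List (Act × Tm Act)) :
      ({a | a ∈ l1.map Prod.fst} : Set Act) ≠ {a | a ∈ l2.map Prod.fst} →
      Deriv Tm.bot (Tm.conj (ecPre l1) (ecPre l2))
  | ecc2 (l : List (Act × Tm Act × Tm Act)) :
      Deriv (ecPre (l.map fun p => (p.1, Tm.conj p.2.1 p.2.2)))
            (Tm.conj (ecPre (l.map fun p => (p.1, p.2.1)))
                     (ecPre (l.map fun p => (p.1, p.2.2))))
  | ecc3 (l : List (Act × Tm Act × Tm Act)) :
      (l.map Prod.fst).Nodup →
      Deriv (Tm.conj (ecPre (l.map fun p => (p.1, p.2.1)))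
                     (ecPre (l.map fun p => (p.1, p.2.2))))
            (ecPre (l.map fun p => (p.1, Tm.conj p.2.1 p.2.2)))
  -- EXP1, EXP2
  | exp1 (A : Set Act) (l1 l2 : List (Act × Tm Act)) :
      (∀ p ∈ l1, Basic p.2) → (∀ q ∈ l2, Basic q.2) →
      Deriv (Tm.par A (ecPre l1) (ecPre l2)) (expRHS A l1 l2)
  | exp2 (A : Set Act) (l1 l2 : List (Act × Tm Act)) :
      (∀ p ∈ l1, Basic p.2) → (∀ q ∈ l2, Basic q.2) →
      Deriv (expRHS A l1 l2) (Tm.par A (ecPre l1) (ecPre l2))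

/-- The set `NF_B` of normal forms different from `⊥`. -/
inductive NFB : Tm Act → Prop where
  | mk (ls : List (List (Act × Tm Act))) :
      ls ≠ [] →
      (∀ l ∈ ls, (l.map Prod.fst).Nodup) →
      (∀ l ∈ ls, ∀ p ∈ l, NFB p.2) →
      NFB (bigDisj (ls.map ecPre))

/-- Normal forms. -/
def NF (t : Tm Act) : Prop := t = Tm.bot ∨ NFB t

end CLL

section Stmt13Aux

open CLL

variable {Act : Type} {M : Model Act}

/-- No term has both a visible transition and a τ-transition. -/
lemma stmt13_nomix (hM : IsStable M) :
    ∀ t : Tm Act, ∀ (a : Act) (u v : Tm Act),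
      STr M t (some a) u → STr M t none v → False := by
  intro t
  induction t with
  | nil => intro a u v h _; cases h
  | bot => intro a u v h _; cases h
  | pre α s => intro a u v h1 h2; cases h1; cases h2
  | ec s1 s2 ih1 ih2 =>
    intro a u v h1 h2
    cases h1 with
    | ecL hx hneg =>
      cases h2 with
      | ecTauL hτ => exact ih1 _ _ _ hx hτ
      | ecTauR hτ => exact hneg _ ((hM.1 _ _ _).mpr hτ)
    | ecR hneg hy =>
      cases h2 with
      | ecTauL hτ => exact hneg _ ((hM.1 _ _ _).mpr hτ)
      | ecTauR hτ => exact ih2 _ _ _ hy hτ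
  | conj s1 s2 ih1 ih2 =>
    intro a u v h1 h2
    cases h1 with
    | conjAct hx hy =>
      cases h2 with
      | conjTauL hτ => exact ih1 _ _ _ hx hτ
      | conjTauR hτ => exact ih2 _ _ _ hy hτ
  | disj s1 s2 ih1 ih2 => intro a u v h1 _; cases h1
  | par A s1 s2 ih1 ih2 =>
    intro a u v h1 h2
    cases h1 with
    | parL hx hneg _ =>
      cases h2 with
      | parTauL hτ => exact ih1 _ _ _ hx hτ
      | parTauR hτ => exact hneg _ ((hM.1 _ _ _).mpr hτ)
    | parR hneg hy _ =>
      cases h2 with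
      | parTauL hτ => exact hneg _ ((hM.1 _ _ _).mpr hτ)
      | parTauR hτ => exact ih2 _ _ _ hy hτ
    | parSync hx hy _ =>
      cases h2 with
      | parTauL hτ => exact ih1 _ _ _ hx hτ
      | parTauR hτ => exact ih2 _ _ _ hy hτ

lemma stmt13_tauL {op : Tm Act → Tm Act → Tm Act} (hop : IsStaticOp Act op)
    {x x' y : Tm Act} (h : STr M x none x') : STr M (op x y) none (op x' y) := by
  rcases hop with rfl | rfl | ⟨A, rfl⟩
  · exact STr.ecTauL h
  · exact STr.conjTauL h
  · exact STr.parTauL h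

lemma stmt13_tauR {op : Tm Act → Tm Act → Tm Act} (hop : IsStaticOp Act op)
    {x y y' : Tm Act} (h : STr M y none y') : STr M (op x y) none (op x y') := by
  rcases hop with rfl | rfl | ⟨A, rfl⟩
  · exact STr.ecTauR h
  · exact STr.conjTauR h
  · exact STr.parTauR h

lemma stmt13_FopL (hM : IsStable M) {op : Tm Act → Tm Act → Tm Act}
    (hop : IsStaticOp Act op) {x y : Tm Act} (h : M.F x) : M.F (op x y) := by
  rw [hM.2.1] at h ⊢
  rcases hop with rfl | rfl | ⟨A, rfl⟩
  · exact SF.ecL h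
  · exact SF.conjL h
  · exact SF.parL h

lemma stmt13_FopR (hM : IsStable M) {op : Tm Act → Tm Act → Tm Act}
    (hop : IsStaticOp Act op) {x y : Tm Act} (h : M.F y) : M.F (op x y) := by
  rw [hM.2.1] at h ⊢
  rcases hop with rfl | rfl | ⟨A, rfl⟩
  · exact SF.ecR h
  · exact SF.conjR h
  · exact SF.parR h

lemma stmt13_FdisjInv (hM : IsStable M) {a b : Tm Act}
    (h : M.F (Tm.disj a b)) : M.F a ∧ M.F b := by
  rw [hM.2.1] at h
  cases h with
  | disj h1 h2 => exact ⟨(hM.2.1 _).mpr h1, (hM.2.1 _).mpr h2⟩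

lemma stmt13_noVis (hM : IsStable M) {op : Tm Act → Tm Act → Tm Act}
    (hop : IsStaticOp Act op) {x y : Tm Act}
    (hc : (∃ x', STr M x none x') ∨
      ((∃ y', STr M y none y') ∧ ∀ (a : Act) (z : Tm Act), ¬ STr M y (some a) z)) :
    ∀ (a : Act) (z : Tm Act), ¬ STr M (op x y) (some a) z := by
  intro a z h
  rcases hop with rfl | rfl | ⟨A, rfl⟩
  · cases h with
    | ecL hx hneg =>
      rcases hc with ⟨x', hx'⟩ | ⟨⟨y', hy'⟩, _⟩
      · exact stmt13_nomix hM _ _ _ _ hx hx'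
      · exact hneg _ ((hM.1 _ _ _).mpr hy')
    | ecR hneg hy =>
      rcases hc with ⟨x', hx'⟩ | ⟨_, hnv⟩
      · exact hneg _ ((hM.1 _ _ _).mpr hx')
      · exact hnv _ _ hy
  · cases h with
    | conjAct hx hy =>
      rcases hc with ⟨x', hx'⟩ | ⟨_, hnv⟩
      · exact stmt13_nomix hM _ _ _ _ hx hx'
      · exact hnv _ _ hy
  · cases h with
    | parL hx hneg _ =>
      rcases hc with ⟨x', hx'⟩ | ⟨⟨y', hy'⟩, _⟩
      · exact stmt13_nomix hM _ _ _ _ hx hx'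
      · exact hneg _ ((hM.1 _ _ _).mpr hy')
    | parR hneg hy _ =>
      rcases hc with ⟨x', hx'⟩ | ⟨_, hnv⟩
      · exact hneg _ ((hM.1 _ _ _).mpr hx')
      · exact hnv _ _ hy
    | parSync hx hy _ =>
      rcases hc with ⟨x', hx'⟩ | ⟨_, hnv⟩
      · exact stmt13_nomix hM _ _ _ _ hx hx'
      · exact hnv _ _ hy

lemma stmt13_notFop (hM : IsStable M) {op : Tm Act → Tm Act → Tm Act}
    (hop : IsStaticOp Act op) {x y : Tm Act}
    (hx : ¬ M.F x) (hy : ¬ M.F y)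
    (hτ : ∃ w, STr M (op x y) none w ∧ ¬ M.F w)
    (hnv : ∀ (a : Act) (z : Tm Act), ¬ STr M (op x y) (some a) z) :
    ¬ M.F (op x y) := by
  intro h
  rw [hM.2.1] at h
  rcases hop with rfl | rfl | ⟨A, rfl⟩
  · cases h with
    | ecL h1 => exact hx ((hM.2.1 _).mpr h1)
    | ecR h2 => exact hy ((hM.2.1 _).mpr h2)
  · cases h with
    | conjL h1 => exact hx ((hM.2.1 _).mpr h1)
    | conjR h2 => exact hy ((hM.2.1 _).mpr h2)
    | conjMisL h1 h2 h3 =>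
      obtain ⟨w, hw, _⟩ := hτ
      exact h3 _ ((hM.1 _ _ _).mpr hw)
    | conjMisR h1 h2 h3 =>
      obtain ⟨w, hw, _⟩ := hτ
      exact h3 _ ((hM.1 _ _ _).mpr hw)
    | conjDead hd hnb =>
      rename_i z α
      cases α with
      | none =>
        obtain ⟨w, hw, hnw⟩ := hτ
        exact hnb ((hM.2.2 _ _).mpr (SFbar.intro hw hnw))
      | some a => exact hnv a _ hd
  · cases h with
    | parL h1 => exact hx ((hM.2.1 _).mpr h1)
    | parR h2 => exact hy ((hM.2.1 _).mpr h2)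

lemma stmt13_opTauInv {op : Tm Act → Tm Act → Tm Act} (hop : IsStaticOp Act op)
    {x y s : Tm Act} (h : STr M (op x y) none s) :
    (∃ x', STr M x none x' ∧ s = op x' y) ∨
    (∃ y', STr M y none y' ∧ s = op x y') := by
  rcases hop with rfl | rfl | ⟨A, rfl⟩
  · cases h with
    | ecTauL h => exact Or.inl ⟨_, h, rfl⟩
    | ecTauR h => exact Or.inr ⟨_, h, rfl⟩
  · cases h with
    | conjTauL h => exact Or.inl ⟨_, h, rfl⟩
    | conjTauR h => exact Or.inr ⟨_, h, rfl⟩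
  · cases h with
    | parTauL h => exact Or.inl ⟨_, h, rfl⟩
    | parTauR h => exact Or.inr ⟨_, h, rfl⟩

lemma stmt13_disjTauInv {a b w : Tm Act}
    (h : STr M (Tm.disj a b) none w) : w = a ∨ w = b := by
  cases h with
  | disjL => exact Or.inl rfl
  | disjR => exact Or.inr rfl

lemma stmt13_ridRS : IsRS M (fun a b => a = b ∧ Stable M a) := by
  rintro t s ⟨rfl, hst⟩
  refine ⟨⟨hst, hst⟩, fun h => h, ?_, fun _ => rfl⟩
  intro a t' hw
  exact ⟨t', hw, rfl, hw.2⟩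

/-- Chain decomposition lemma for `op u (t2 ∨ t3) ⇒ε_F| t'`. -/
lemma stmt13_mainchain (hM : IsStable M) {op : Tm Act → Tm Act → Tm Act}
    (hop : IsStaticOp Act op) {t2 t3 t' : Tm Act} (hstab : Stable M t') :
    ∀ s, Relation.ReflTransGen (TauF M) s t' →
      ∀ u, s = op u (Tm.disj t2 t3) →
      ∃ ti, (ti = t2 ∨ ti = t3) ∧ EpsF M (op u ti) t' := by
  intro s hchain
  induction hchain using Relation.ReflTransGen.head_induction_on with
  | refl =>
    intro u hu
    subst hu
    exact absurd ((hM.1 _ _ _).mpr (stmt13_tauR hop (STr.disjL t2 t3))) (hstab _)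
  | head hstep hrest ih =>
    intro u hu
    subst hu
    obtain ⟨htr, hnFs, hnFc⟩ := hstep
    rcases stmt13_opTauInv hop ((hM.1 _ _ _).mp htr) with ⟨u', hu', rfl⟩ | ⟨y', hy', rfl⟩
    · obtain ⟨ti, hti, hE⟩ := ih u' rfl
      have hstep' : STr M (op u ti) none (op u' ti) := stmt13_tauL hop hu'
      have hnFuTi : ¬ M.F (op u ti) := by
        apply stmt13_notFop hM hop
        · intro h; exact hnFs (stmt13_FopL hM hop h)
        · intro h; exact hE.1 (stmt13_FopR hM hop h)
        · exact ⟨_, hstep', hE.1⟩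
        · exact stmt13_noVis hM hop (Or.inl ⟨_, hu'⟩)
      exact ⟨ti, hti, hnFuTi,
        Relation.ReflTransGen.head ⟨(hM.1 _ _ _).mpr hstep', hnFuTi, hE.1⟩ hE.2⟩
    · rcases stmt13_disjTauInv hy' with rfl | rfl
      · exact ⟨_, Or.inl rfl, hnFc, hrest⟩
      · exact ⟨_, Or.inr rfl, hnFc, hrest⟩

end Stmt13Aux

/-- `□`, `∥_A` and `∧` distribute over `∨` up to `=_RS`. -/
theorem stmt13 (Act : Type) (M : CLL.Model Act) (hM : CLL.IsStable M)
    (op : CLL.Tm Act → CLL.Tm Act → CLL.Tm Act) (hop : CLL.IsStaticOp Act op)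
    (t1 t2 t3 : CLL.Tm Act) :
    CLL.RSeq M (op t1 (CLL.Tm.disj t2 t3)) (CLL.Tm.disj (op t1 t2) (op t1 t3)) := by
  open CLL in
  constructor
  · -- L ⊑_RS R
    intro t' ht'
    obtain ⟨⟨hnFL, hchain⟩, hstab⟩ := ht'
    obtain ⟨ti, hti, hE⟩ := stmt13_mainchain hM hop hstab _ hchain t1 rfl
    have hstepR : STr M (Tm.disj (op t1 t2) (op t1 t3)) none (op t1 ti) := by
      rcases hti with rfl | rfl
      · exact STr.disjL _ _
      · exact STr.disjR _ _
    have hnFR : ¬ M.F (Tm.disj (op t1 t2) (op t1 t3)) := by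
      intro h
      obtain ⟨h1, h2⟩ := stmt13_FdisjInv hM h
      rcases hti with rfl | rfl
      · exact hE.1 h1
      · exact hE.1 h2
    exact ⟨t', ⟨⟨hnFR,
        Relation.ReflTransGen.head ⟨(hM.1 _ _ _).mpr hstepR, hnFR, hE.1⟩ hE.2⟩, hstab⟩,
      _, stmt13_ridRS, rfl, hstab⟩
  · -- R ⊑_RS L
    intro s' hs'
    obtain ⟨⟨hnFR, hchain⟩, hstab⟩ := hs'
    rcases hchain.cases_head with rfl | ⟨w, hstep, hrest⟩
    · exact absurd ((hM.1 _ _ _).mpr (STr.disjL _ _)) (hstab _)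
    · obtain ⟨htr, _, hnFw⟩ := hstep
      have key : ∀ ti, STr M (Tm.disj t2 t3) none ti → ¬ M.F (op t1 ti) →
          Relation.ReflTransGen (TauF M) (op t1 ti) s' →
          ∃ u', EpsFS M (op t1 (Tm.disj t2 t3)) u' ∧ RSs M s' u' := by
        intro ti hdstep hnFti hrest'
        have hLw : STr M (op t1 (Tm.disj t2 t3)) none (op t1 ti) :=
          stmt13_tauR hop hdstep
        have hnFL : ¬ M.F (op t1 (Tm.disj t2 t3)) := by
          apply stmt13_notFop hM hop
          · intro h; exact hnFti (stmt13_FopL hM hop h)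
          · intro h
            obtain ⟨h2, h3⟩ := stmt13_FdisjInv hM h
            rcases stmt13_disjTauInv hdstep with rfl | rfl
            · exact hnFti (stmt13_FopR hM hop h2)
            · exact hnFti (stmt13_FopR hM hop h3)
          · exact ⟨_, hLw, hnFti⟩
          · exact stmt13_noVis hM hop
              (Or.inr ⟨⟨t2, STr.disjL _ _⟩, fun a z h => by cases h⟩)
        exact ⟨s', ⟨⟨hnFL,
            Relation.ReflTransGen.head ⟨(hM.1 _ _ _).mpr hLw, hnFL, hnFti⟩ hrest'⟩, hstab⟩,
          _, stmt13_ridRS, rfl, hstab⟩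
      rcases stmt13_disjTauInv ((hM.1 _ _ _).mp htr) with rfl | rfl
      · exact key t2 (STr.disjL _ _) hnFw hrest
      · exact key t3 (STr.disjR _ _) hnFw hrest
end

section
/- Let a_i ∈ Act for each i < n and let all t_i, s_i be CLL process terms. If □_{i<n}a_i.t_i is injective in prefixes, then □_{i<n}a_i.t_i ∧ □_{i<n}a_i.s_i ⊑_RS □_{i<n}a_i.(t_i∧s_i). -/
/-!
Both sides are stable, and since the prefixes are pairwise distinct the conjunction can
perform `a_i` only by synchronising its two `a_i`-summands: it has exactly the transitions
`a_i → t_i ∧ s_i` of the right-hand side. Relating the two terms, and every later stable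
term to itself, therefore gives a stable ready simulation, provided the right-hand side is
consistent whenever the left-hand side is. If some `t_i ∧ s_i` is inconsistent, it is the
only `a_i`-successor of the conjunction, which thus fails `F̄_{a_i}` and is inconsistent too.
-/

namespace CLL

attribute [local instance] Classical.propDecidable

variable {Act : Type}

end CLL

namespace CLL

variable {Act : Type} {M : Model Act}

section StableModel

variable (hM : IsStable M)
include hM

theorem stable_pre_some (a : Act) (u : Tm Act) : Stable M (Tm.pre (some a) u) := by
  intro y hy
  rw [hM.1] at hy
  cases hy

theorem stable_ec {t1 t2 : Tm Act} (h1 : Stable M t1) (h2 : Stable M t2) :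
    Stable M (Tm.ec t1 t2) := by
  intro y hy
  rw [hM.1] at hy
  cases hy with
  | ecTauL h => exact h1 _ ((hM.1 _ _ _).mpr h)
  | ecTauR h => exact h2 _ ((hM.1 _ _ _).mpr h)

theorem stable_conj {t1 t2 : Tm Act} (h1 : Stable M t1) (h2 : Stable M t2) :
    Stable M (Tm.conj t1 t2) := by
  intro y hy
  rw [hM.1] at hy
  cases hy with
  | conjTauL h => exact h1 _ ((hM.1 _ _ _).mpr h)
  | conjTauR h => exact h2 _ ((hM.1 _ _ _).mpr h)

theorem tr_pre_some {b a : Act} {u y : Tm Act} :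
    M.Tr (Tm.pre (some b) u) (some a) y ↔ b = a ∧ y = u := by
  rw [hM.1]
  constructor
  · rintro ⟨⟩
    exact ⟨rfl, rfl⟩
  · rintro ⟨rfl, rfl⟩
    exact STr.pre _ _

theorem tr_ec_of_stable {t1 t2 : Tm Act} (h1 : Stable M t1) (h2 : Stable M t2)
    {a : Act} {y : Tm Act} :
    M.Tr (Tm.ec t1 t2) (some a) y ↔ M.Tr t1 (some a) y ∨ M.Tr t2 (some a) y := by
  rw [hM.1, hM.1, hM.1]
  constructor
  · intro h
    cases h with
    | ecL h _ => exact Or.inl h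
    | ecR _ h => exact Or.inr h
  · rintro (h | h)
    · exact STr.ecL h h2
    · exact STr.ecR h1 h

theorem tr_conj_some {t1 t2 : Tm Act} {a : Act} {y : Tm Act} :
    M.Tr (Tm.conj t1 t2) (some a) y ↔
      ∃ y1 y2, M.Tr t1 (some a) y1 ∧ M.Tr t2 (some a) y2 ∧ y = Tm.conj y1 y2 := by
  simp only [hM.1]
  constructor
  · intro h
    cases h with
    | conjAct h1 h2 => exact ⟨_, _, h1, h2, rfl⟩
  · rintro ⟨y1, y2, h1, h2, rfl⟩
    exact STr.conjAct h1 h2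

theorem not_F_nil : ¬ M.F (Tm.nil : Tm Act) := by
  rw [hM.2.1]
  rintro ⟨⟩

theorem F_of_F_pre {α : Option Act} {u : Tm Act} (h : M.F (Tm.pre α u)) : M.F u := by
  rw [hM.2.1] at h ⊢
  cases h with
  | pre _ h => exact h

theorem F_or_F_of_F_ec {t1 t2 : Tm Act} (h : M.F (Tm.ec t1 t2)) : M.F t1 ∨ M.F t2 := by
  simp only [hM.2.1] at h ⊢
  cases h with
  | ecL h => exact Or.inl h
  | ecR h => exact Or.inr h

-- The conjunction fails `F̄_α`, so the last rule for `F` applies.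
theorem F_conj_of_forall_tr_F {t1 t2 z : Tm Act} {α : Option Act}
    (hz : M.Tr (Tm.conj t1 t2) α z) (hF : ∀ y, M.Tr (Tm.conj t1 t2) α y → M.F y) :
    M.F (Tm.conj t1 t2) := by
  rw [hM.2.1]
  refine SF.conjDead ((hM.1 _ _ _).mp hz) fun hFbar => ?_
  rw [hM.2.2] at hFbar
  obtain ⟨hy, hFy⟩ := hFbar
  exact hFy (hF _ ((hM.1 _ _ _).mpr hy))

theorem stable_bigEC {ts : List (Tm Act)} (hts : ∀ t ∈ ts, Stable M t) :
    Stable M (bigEC ts) := by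
  cases ts with
  | nil =>
    intro y hy
    rw [hM.1] at hy
    cases hy
  | cons t ts =>
    induction ts generalizing t with
    | nil => exact hts t List.mem_cons_self
    | cons u ts ih =>
      exact ih (Tm.ec t u) fun v hv => by
        rcases List.mem_cons.mp hv with rfl | hv
        · exact stable_ec hM (hts _ List.mem_cons_self) (hts u (by simp))
        · exact hts v (by simp [hv])

theorem tr_bigEC {ts : List (Tm Act)} (hts : ∀ t ∈ ts, Stable M t) {a : Act} {y : Tm Act} :
    M.Tr (bigEC ts) (some a) y ↔ ∃ t ∈ ts, M.Tr t (some a) y := by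
  cases ts with
  | nil =>
    simp only [List.not_mem_nil, false_and, exists_false, iff_false, hM.1]
    rintro ⟨⟩
  | cons t ts =>
    induction ts generalizing t with
    | nil => simp [bigEC]
    | cons u ts ih =>
      have ht : Stable M t := hts t List.mem_cons_self
      have hu : Stable M u := hts u (by simp)
      rw [show bigEC (t :: u :: ts) = bigEC (Tm.ec t u :: ts) from rfl,
        ih (Tm.ec t u) fun v hv => ?_]
      · simp [tr_ec_of_stable hM ht hu, or_assoc]
      rcases List.mem_cons.mp hv with rfl | hv
      · exact stable_ec hM ht hu
      · exact hts v (by simp [hv])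

theorem exists_F_of_F_bigEC {ts : List (Tm Act)} (h : M.F (bigEC ts)) :
    ∃ t ∈ ts, M.F t := by
  cases ts with
  | nil => exact absurd h (not_F_nil hM)
  | cons t ts =>
    induction ts generalizing t with
    | nil => exact ⟨t, List.mem_cons_self, h⟩
    | cons u ts ih =>
      obtain ⟨v, hv, hFv⟩ := ih (Tm.ec t u) h
      rcases List.mem_cons.mp hv with rfl | hv
      · rcases F_or_F_of_F_ec hM hFv with hF | hF
        · exact ⟨_, List.mem_cons_self, hF⟩
        · exact ⟨u, by simp, hF⟩
      · exact ⟨v, by simp [hv], hFv⟩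

theorem stable_ecPre (L : List (Act × Tm Act)) : Stable M (ecPre L) :=
  stable_bigEC hM <|
    List.forall_mem_map.mpr fun q _ => stable_pre_some hM q.1 q.2

theorem tr_ecPre {L : List (Act × Tm Act)} {a : Act} {y : Tm Act} :
    M.Tr (ecPre L) (some a) y ↔ ∃ q ∈ L, q.1 = a ∧ y = q.2 := by
  rw [ecPre, tr_bigEC hM (List.forall_mem_map.mpr fun q _ => stable_pre_some hM q.1 q.2)]
  simp [tr_pre_some hM]

theorem exists_F_of_F_ecPre {L : List (Act × Tm Act)} (h : M.F (ecPre L)) :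
    ∃ q ∈ L, M.F q.2 := by
  obtain ⟨t, ht, hF⟩ := exists_F_of_F_bigEC hM h
  obtain ⟨q, hq, rfl⟩ := List.mem_map.mp ht
  exact ⟨q, hq, F_of_F_pre hM hF⟩

theorem tr_conj_ecPre_of_nodup {l : List (Act × Tm Act × Tm Act)}
    (hinj : (l.map Prod.fst).Nodup) {a : Act} {y : Tm Act} :
    M.Tr (Tm.conj (ecPre (l.map fun p => (p.1, p.2.1))) (ecPre (l.map fun p => (p.1, p.2.2))))
        (some a) y ↔
      ∃ p ∈ l, p.1 = a ∧ y = Tm.conj p.2.1 p.2.2 := by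
  simp only [tr_conj_some hM, tr_ecPre hM, List.mem_map, exists_exists_and_eq_and]
  constructor
  · rintro ⟨_, _, ⟨p, hp, rfl, rfl⟩, ⟨q, hq, hqa, rfl⟩, rfl⟩
    obtain rfl := List.inj_on_of_nodup_map hinj hp hq hqa.symm
    exact ⟨p, hp, rfl, rfl⟩
  · rintro ⟨p, hp, rfl, rfl⟩
    exact ⟨_, _, ⟨p, hp, rfl, rfl⟩, ⟨p, hp, rfl, rfl⟩, rfl⟩

end StableModel

theorem eq_of_epsF_of_stable {t r : Tm Act} (ht : Stable M t) (h : EpsF M t r) : r = t := by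
  rcases h.2.cases_head with h | ⟨c, ⟨hc, -, -⟩, -⟩
  · exact h.symm
  · exact absurd hc (ht c)

theorem rsle_of_stable_of_tr_iff {t s : Tm Act} (ht : Stable M t) (hs : Stable M s)
    (htr : ∀ a y, M.Tr t (some a) y ↔ M.Tr s (some a) y) (hF : ¬ M.F t → ¬ M.F s) :
    RSle M t s := by
  rintro t' ⟨hEps, -⟩
  obtain rfl := eq_of_epsF_of_stable ht hEps
  refine ⟨s, ⟨⟨hF hEps.1, .refl⟩, hs⟩, fun x y => (x = t' ∧ y = s) ∨ (x = y ∧ Stable M x),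
    ?_, .inl ⟨rfl, rfl⟩⟩
  rintro x y (⟨hx, hy⟩ | ⟨rfl, hx⟩)
  · subst x y
    refine ⟨⟨ht, hs⟩, hF, ?_, fun _ => ?_⟩
    · rintro a t'' ⟨⟨r, p, hr, hp, hpt⟩, hst⟩
      obtain rfl := eq_of_epsF_of_stable ht hr
      exact ⟨t'', ⟨⟨s, p, ⟨hF hr.1, .refl⟩, (htr a p).mp hp, hpt⟩, hst⟩, .inr ⟨rfl, hst⟩⟩
    · ext (_ | a)
      · exact ⟨fun ⟨u, hu⟩ => absurd hu (ht u), fun ⟨u, hu⟩ => absurd hu (hs u)⟩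
      · exact exists_congr fun y => htr a y
  · exact ⟨⟨hx, hx⟩, id, fun _ x' h => ⟨x', h, .inr ⟨rfl, h.2⟩⟩, fun _ => rfl⟩

end CLL

/-- for choices injective in prefixes, conjunction distributes
over the general external choice. -/
theorem stmt15 (Act : Type) (M : CLL.Model Act) (hM : CLL.IsStable M)
    (l : List (Act × CLL.Tm Act × CLL.Tm Act))
    (hinj : (l.map Prod.fst).Nodup) :
    CLL.RSle M
      (CLL.Tm.conj (CLL.ecPre (l.map fun p => (p.1, p.2.1)))
                   (CLL.ecPre (l.map fun p => (p.1, p.2.2))))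
      (CLL.ecPre (l.map fun p => (p.1, CLL.Tm.conj p.2.1 p.2.2))) := by
  have htr_conj := fun a y => CLL.tr_conj_ecPre_of_nodup hM hinj (a := a) (y := y)
  have htr_choice : ∀ a y,
      M.Tr (CLL.ecPre (l.map fun p => (p.1, CLL.Tm.conj p.2.1 p.2.2))) (some a) y ↔
        ∃ p ∈ l, p.1 = a ∧ y = CLL.Tm.conj p.2.1 p.2.2 := by
    simp only [CLL.tr_ecPre hM, List.mem_map, exists_exists_and_eq_and, implies_true]
  refine CLL.rsle_of_stable_of_tr_iff
    (CLL.stable_conj hM (CLL.stable_ecPre hM _) (CLL.stable_ecPre hM _))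
    (CLL.stable_ecPre hM _) (fun a y => (htr_conj a y).trans (htr_choice a y).symm)
    fun hF_conj hF_choice => hF_conj ?_
  obtain ⟨_, hq, hFp⟩ := CLL.exists_F_of_F_ecPre hM hF_choice
  obtain ⟨p, hp, rfl⟩ := List.mem_map.mp hq
  refine CLL.F_conj_of_forall_tr_F hM ((htr_conj _ _).mpr ⟨p, hp, rfl, rfl⟩) fun y hy => ?_
  obtain ⟨q, hq, hqp, rfl⟩ := (htr_conj _ _).mp hy
  obtain rfl := List.inj_on_of_nodup_map hinj hq hp hqp
  exact hFp
end

section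
/- Normal Form Theorem: for every closed CLL process term t there exists a term s in normal form (s ∈ NF) such that ⊢ t = s in AX_CLL. -/
namespace CLL

attribute [local instance] Classical.propDecidable

variable {Act : Type}

end CLL

/-!
The normal form is built by structural induction on the term. `⊥` absorbs `□`, `∧`, `∥_A` and
visible prefixes (EC5, CO4, PA2, PR1) and is neutral for `∨` (DI4), so only terms in `NF_B` have to
be combined. Each of `□`, `∧`, `∥_A` distributes over `∨` (DS1–DS3), which reduces combining two
`NF_B` terms to combining two of their disjuncts `□ a_i.x_i` and `□ b_j.y_j`:
* for `□`, the two sums are concatenated and equal prefixes are fused by DS4,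
  `a.x □ a.y = a.(x ∨ y)`;
* for `∧`, either the prefix sets differ and the result is `⊥` (ECC1), or, after reordering one sum,
  ECC2/ECC3 give `□ a_i.(x_i ∧ y_i)`, where `x_i` is a proper subterm of the first argument;
* for `∥_A`, the expansion law leaves parallel compositions whose arguments are the original ones
  or their continuations `x_i`, `y_j`, at least one being a continuation, so a nested induction on
  both arguments applies.
-/

namespace CLL

variable {Act : Type}

def Eqv (t s : Tm Act) : Prop := Deriv t s ∧ Deriv s t

namespace Eqv

theorem refl (t : Tm Act) : Eqv t t := ⟨.refl t, .refl t⟩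

theorem symm {t s : Tm Act} (h : Eqv t s) : Eqv s t := ⟨h.2, h.1⟩

theorem trans {t u s : Tm Act} (h₁ : Eqv t u) (h₂ : Eqv u s) : Eqv t s :=
  ⟨h₁.1.trans h₂.1, h₂.2.trans h₁.2⟩

instance : Trans (Eqv (Act := Act)) Eqv Eqv := ⟨trans⟩

theorem pre (α : Option Act) {t s : Tm Act} (h : Eqv t s) : Eqv (.pre α t) (.pre α s) :=
  ⟨.pre_mono α h.1, .pre_mono α h.2⟩

theorem ec {t₁ s₁ t₂ s₂ : Tm Act} (h₁ : Eqv t₁ s₁) (h₂ : Eqv t₂ s₂) :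
    Eqv (.ec t₁ t₂) (.ec s₁ s₂) :=
  ⟨.ec_mono h₁.1 h₂.1, .ec_mono h₁.2 h₂.2⟩

theorem conj {t₁ s₁ t₂ s₂ : Tm Act} (h₁ : Eqv t₁ s₁) (h₂ : Eqv t₂ s₂) :
    Eqv (.conj t₁ t₂) (.conj s₁ s₂) :=
  ⟨.conj_mono h₁.1 h₂.1, .conj_mono h₁.2 h₂.2⟩

theorem disj {t₁ s₁ t₂ s₂ : Tm Act} (h₁ : Eqv t₁ s₁) (h₂ : Eqv t₂ s₂) :
    Eqv (.disj t₁ t₂) (.disj s₁ s₂) :=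
  ⟨.disj_mono h₁.1 h₂.1, .disj_mono h₁.2 h₂.2⟩

theorem par (A : Set Act) {t₁ s₁ t₂ s₂ : Tm Act} (h₁ : Eqv t₁ s₁) (h₂ : Eqv t₂ s₂) :
    Eqv (.par A t₁ t₂) (.par A s₁ s₂) :=
  ⟨.par_mono A h₁.1 h₂.1, .par_mono A h₁.2 h₂.2⟩

theorem ec_comm (x y : Tm Act) : Eqv (.ec x y) (.ec y x) := ⟨.ec_comm x y, .ec_comm y x⟩

theorem ec_assoc (x y z : Tm Act) : Eqv (.ec (.ec x y) z) (.ec x (.ec y z)) :=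
  ⟨.ec_assoc1 x y z, .ec_assoc2 x y z⟩

theorem ec_nil (x : Tm Act) : Eqv (.ec x .nil) x := ⟨.ec_nil1 x, .ec_nil2 x⟩

theorem di_comm (x y : Tm Act) : Eqv (.disj x y) (.disj y x) := ⟨.di_comm x y, .di_comm y x⟩

theorem di_assoc (x y z : Tm Act) : Eqv (.disj (.disj x y) z) (.disj x (.disj y z)) :=
  ⟨.di_assoc2 x y z, .di_assoc1 x y z⟩

theorem di_bot (x : Tm Act) : Eqv (.disj x .bot) x := ⟨.di_bot1 x, .di_bot2 x⟩

theorem bot_di (x : Tm Act) : Eqv (.disj .bot x) x := (di_comm _ _).trans (di_bot x)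

theorem pr1 (a : Act) : Eqv (.pre (some a) .bot) .bot := ⟨.pr1a a, .pr1b a⟩

theorem pr2 (x : Tm Act) : Eqv (.pre none x) x := ⟨.pr2a x, .pr2b x⟩

end Eqv

theorem Deriv.disj_le {x y z : Tm Act} (hx : Deriv x z) (hy : Deriv y z) :
    Deriv (.disj x y) z :=
  (Deriv.disj_mono hx hy).trans (.di_idem1 z)

theorem Deriv.le_disj_right (x y : Tm Act) : Deriv y (.disj x y) :=
  (Deriv.di_le y x).trans (.di_comm y x)

theorem isStaticOp_ec : IsStaticOp Act Tm.ec := Or.inl rfl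

theorem isStaticOp_conj : IsStaticOp Act Tm.conj := Or.inr (Or.inl rfl)

theorem isStaticOp_par (A : Set Act) : IsStaticOp Act (Tm.par A) := Or.inr (Or.inr ⟨A, rfl⟩)

namespace IsStaticOp

variable {op : Tm Act → Tm Act → Tm Act}

theorem mono (hop : IsStaticOp Act op) {a b c d : Tm Act} (h₁ : Deriv a b) (h₂ : Deriv c d) :
    Deriv (op a c) (op b d) := by
  rcases hop with rfl | rfl | ⟨A, rfl⟩
  exacts [.ec_mono h₁ h₂, .conj_mono h₁ h₂, .par_mono A h₁ h₂]

theorem congr (hop : IsStaticOp Act op) {a b c d : Tm Act} (h₁ : Eqv a b) (h₂ : Eqv c d) :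
    Eqv (op a c) (op b d) :=
  ⟨hop.mono h₁.1 h₂.1, hop.mono h₁.2 h₂.2⟩

theorem comm (hop : IsStaticOp Act op) (x y : Tm Act) : Eqv (op x y) (op y x) := by
  rcases hop with rfl | rfl | ⟨A, rfl⟩
  exacts [⟨.ec_comm x y, .ec_comm y x⟩, ⟨.co_comm x y, .co_comm y x⟩,
    ⟨.pa_comm A x y, .pa_comm A y x⟩]

theorem distrib (hop : IsStaticOp Act op) (x y z : Tm Act) :
    Eqv (op x (.disj y z)) (.disj (op x y) (op x z)) := by
  refine ⟨?_, Deriv.disj_le (hop.mono (.refl x) (.di_le y z))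
    (hop.mono (.refl x) (.le_disj_right y z))⟩
  rcases hop with rfl | rfl | ⟨A, rfl⟩
  exacts [.ds1 x y z, .ds2 x y z, .ds3 A x y z]

theorem bot_right (hop : IsStaticOp Act op) (x : Tm Act) : Eqv (op x .bot) .bot := by
  rcases hop with rfl | rfl | ⟨A, rfl⟩
  exacts [⟨.ec_bot1 x, .ec_bot2 x⟩, ⟨.co_bot1 x, .co_bot2 x⟩, ⟨.pa_bot1 A x, .pa_bot2 A x⟩]

theorem bot_left (hop : IsStaticOp Act op) (x : Tm Act) : Eqv (op .bot x) .bot :=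
  (hop.comm _ _).trans (hop.bot_right x)

end IsStaticOp

theorem foldl_eqv {op : Tm Act → Tm Act → Tm Act}
    (hop : ∀ {a b} c, Eqv a b → Eqv (op a c) (op b c)) :
    ∀ (ts : List (Tm Act)) {a b : Tm Act}, Eqv a b → Eqv (ts.foldl op a) (ts.foldl op b)
  | [], _, _, h => h
  | t :: ts, _, _, h => foldl_eqv hop ts (hop t h)

theorem foldl_assoc {op : Tm Act → Tm Act → Tm Act}
    (hop : ∀ {a b} c, Eqv a b → Eqv (op a c) (op b c))
    (assoc : ∀ x y z, Eqv (op (op x y) z) (op x (op y z))) :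
    ∀ (ts : List (Tm Act)) (a b : Tm Act), Eqv (ts.foldl op (op a b)) (op a (ts.foldl op b))
  | [], _, _ => .refl _
  | t :: ts, a, b =>
    (foldl_eqv hop ts (assoc a b t)).trans (foldl_assoc hop assoc ts a (op b t))

theorem bigEC_cons (t : Tm Act) (ts : List (Tm Act)) :
    Eqv (bigEC (t :: ts)) (.ec t (bigEC ts)) := by
  cases ts with
  | nil => exact (Eqv.ec_nil t).symm
  | cons u us => exact foldl_assoc (fun c h => h.ec (.refl c)) Eqv.ec_assoc us t u

theorem bigDisj_cons (t : Tm Act) {ts : List (Tm Act)} (hts : ts ≠ []) :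
    Eqv (bigDisj (t :: ts)) (.disj t (bigDisj ts)) := by
  cases ts with
  | nil => exact absurd rfl hts
  | cons u us => exact foldl_assoc (fun c h => h.disj (.refl c)) Eqv.di_assoc us t u

theorem bigEC_append : ∀ l₁ l₂ : List (Tm Act), Eqv (.ec (bigEC l₁) (bigEC l₂)) (bigEC (l₁ ++ l₂))
  | [], _ => (Eqv.ec_comm _ _).trans (Eqv.ec_nil _)
  | t :: l₁, l₂ =>
    calc Eqv (.ec (bigEC (t :: l₁)) (bigEC l₂)) (.ec (.ec t (bigEC l₁)) (bigEC l₂)) :=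
          (bigEC_cons t l₁).ec (.refl _)
      Eqv _ (.ec t (.ec (bigEC l₁) (bigEC l₂))) := Eqv.ec_assoc _ _ _
      Eqv _ (.ec t (bigEC (l₁ ++ l₂))) := (Eqv.refl t).ec (bigEC_append l₁ l₂)
      Eqv _ (bigEC (t :: l₁ ++ l₂)) := (bigEC_cons t _).symm

theorem bigDisj_append : ∀ {l₁ l₂ : List (Tm Act)}, l₁ ≠ [] → l₂ ≠ [] →
    Eqv (.disj (bigDisj l₁) (bigDisj l₂)) (bigDisj (l₁ ++ l₂))
  | [t], _, _, h₂ => (bigDisj_cons t h₂).symm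
  | t :: u :: l₁, l₂, _, h₂ =>
    calc Eqv (.disj (bigDisj (t :: u :: l₁)) (bigDisj l₂))
          (.disj (.disj t (bigDisj (u :: l₁))) (bigDisj l₂)) :=
          (bigDisj_cons t (List.cons_ne_nil u l₁)).disj (.refl _)
      Eqv _ (.disj t (.disj (bigDisj (u :: l₁)) (bigDisj l₂))) := Eqv.di_assoc _ _ _
      Eqv _ (.disj t (bigDisj (u :: l₁ ++ l₂))) :=
          (Eqv.refl t).disj (bigDisj_append (List.cons_ne_nil u l₁) h₂)
      Eqv _ (bigDisj (t :: u :: l₁ ++ l₂)) := (bigDisj_cons t (List.cons_ne_nil _ _)).symm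

theorem bigEC_perm {ts ts' : List (Tm Act)} (h : ts.Perm ts') : Eqv (bigEC ts) (bigEC ts') := by
  induction h with
  | nil => exact .refl _
  | cons x _ ih => exact (bigEC_cons x _).trans (((Eqv.refl x).ec ih).trans (bigEC_cons x _).symm)
  | swap x y l =>
    calc Eqv (bigEC (y :: x :: l)) (.ec y (.ec x (bigEC l))) :=
          (bigEC_cons y _).trans ((Eqv.refl y).ec (bigEC_cons x l))
      Eqv _ (.ec (.ec y x) (bigEC l)) := (Eqv.ec_assoc _ _ _).symm
      Eqv _ (.ec (.ec x y) (bigEC l)) := (Eqv.ec_comm y x).ec (.refl _)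
      Eqv _ (.ec x (.ec y (bigEC l))) := Eqv.ec_assoc _ _ _
      Eqv _ (bigEC (x :: y :: l)) :=
          ((Eqv.refl x).ec (bigEC_cons y l).symm).trans (bigEC_cons x _).symm
  | trans _ _ ih₁ ih₂ => exact ih₁.trans ih₂

theorem ecPre_cons (a : Act) (x : Tm Act) (l : List (Act × Tm Act)) :
    Eqv (ecPre ((a, x) :: l)) (.ec (.pre (some a) x) (ecPre l)) :=
  bigEC_cons _ _

theorem ecPre_append (l₁ l₂ : List (Act × Tm Act)) :
    Eqv (.ec (ecPre l₁) (ecPre l₂)) (ecPre (l₁ ++ l₂)) := by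
  unfold ecPre
  rw [List.map_append]
  exact bigEC_append _ _

theorem ecPre_perm {l l' : List (Act × Tm Act)} (h : l.Perm l') : Eqv (ecPre l) (ecPre l') :=
  bigEC_perm (h.map _)

theorem Basic.foldl {op : Tm Act → Tm Act → Tm Act}
    (hop : ∀ {x y}, Basic x → Basic y → Basic (op x y)) :
    ∀ (ts : List (Tm Act)) {a : Tm Act}, Basic a → (∀ t ∈ ts, Basic t) → Basic (ts.foldl op a)
  | [], _, ha, _ => ha
  | t :: ts, _, ha, h =>
    Basic.foldl hop ts (hop ha (h t List.mem_cons_self)) fun u hu => h u (List.mem_cons_of_mem t hu)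

theorem Basic.bigEC : ∀ {ts : List (Tm Act)}, (∀ t ∈ ts, Basic t) → Basic (bigEC ts)
  | [], _ => .nil
  | t :: ts, h =>
    Basic.foldl .ec ts (h t List.mem_cons_self) fun u hu => h u (List.mem_cons_of_mem t hu)

theorem Basic.bigDisj : ∀ {ts : List (Tm Act)}, (∀ t ∈ ts, Basic t) → Basic (bigDisj ts)
  | [], _ => .nil
  | t :: ts, h =>
    Basic.foldl .disj ts (h t List.mem_cons_self) fun u hu => h u (List.mem_cons_of_mem t hu)

theorem Basic.ecPre {l : List (Act × Tm Act)} (h : ∀ p ∈ l, Basic p.2) : Basic (ecPre l) :=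
  Basic.bigEC (List.forall_mem_map.2 fun p hp => .pre _ (h p hp))

theorem NFB.basic {t : Tm Act} (h : NFB t) : Basic t := by
  induction h with
  | mk ls _ _ _ ih =>
    exact Basic.bigDisj (List.forall_mem_map.2 fun l hl => Basic.ecPre (ih l hl))

theorem NFB.ecPre {l : List (Act × Tm Act)} (hnd : (l.map Prod.fst).Nodup)
    (hb : ∀ p ∈ l, NFB p.2) : NFB (ecPre l) :=
  NFB.mk [l] (List.cons_ne_nil _ _) (by simpa using hnd) (by simpa using hb)

theorem NFB.nil : NFB (Tm.nil : Tm Act) :=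
  NFB.ecPre (l := []) List.nodup_nil (by simp)

theorem NFB.pre (a : Act) {t : Tm Act} (h : NFB t) : NFB (.pre (some a) t) :=
  NFB.ecPre (l := [(a, t)]) (List.nodup_singleton a) (by simpa using h)

theorem NFB.exists_disj_eqv {u v : Tm Act} (hu : NFB u) (hv : NFB v) :
    ∃ w, NFB w ∧ Eqv (.disj u v) w := by
  obtain ⟨ls₁, hne₁, hnd₁, hb₁⟩ := hu
  obtain ⟨ls₂, hne₂, hnd₂, hb₂⟩ := hv
  refine ⟨_, NFB.mk (ls₁ ++ ls₂) (by simp [hne₁]) ?_ ?_, ?_⟩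
  · simpa only [List.forall_mem_append] using ⟨hnd₁, hnd₂⟩
  · simpa only [List.forall_mem_append] using ⟨hb₁, hb₂⟩
  · rw [List.map_append]
    exact bigDisj_append (by simpa using hne₁) (by simpa using hne₂)

def HasNF (t : Tm Act) : Prop := ∃ s, NF s ∧ Eqv t s

theorem HasNF.of_eqv {t s : Tm Act} (h : Eqv t s) (hs : HasNF s) : HasNF t :=
  let ⟨w, hw, e⟩ := hs
  ⟨w, hw, h.trans e⟩

theorem NF.hasNF {t : Tm Act} (h : NF t) : HasNF t := ⟨t, h, .refl t⟩

theorem NFB.hasNF {t : Tm Act} (h : NFB t) : HasNF t := NF.hasNF (Or.inr h)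

theorem HasNF.bot : HasNF (Tm.bot : Tm Act) := NF.hasNF (Or.inl rfl)

theorem HasNF.disj {t₁ t₂ : Tm Act} (h₁ : HasNF t₁) (h₂ : HasNF t₂) : HasNF (.disj t₁ t₂) := by
  obtain ⟨s₁, hs₁, e₁⟩ := h₁
  obtain ⟨s₂, hs₂, e₂⟩ := h₂
  refine .of_eqv (e₁.disj e₂) ?_
  rcases hs₁ with rfl | hb₁
  · exact .of_eqv (Eqv.bot_di s₂) hs₂.hasNF
  rcases hs₂ with rfl | hb₂
  · exact .of_eqv (Eqv.di_bot s₁) hb₁.hasNF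
  obtain ⟨w, hw, e⟩ := hb₁.exists_disj_eqv hb₂
  exact .of_eqv e hw.hasNF

theorem HasNF.pre (α : Option Act) {t : Tm Act} (h : HasNF t) : HasNF (.pre α t) := by
  obtain ⟨s, hs, e⟩ := h
  cases α with
  | none => exact .of_eqv (Eqv.pr2 t) ⟨s, hs, e⟩
  | some a =>
    refine .of_eqv (e.pre _) ?_
    rcases hs with rfl | hb
    exacts [.of_eqv (Eqv.pr1 a) .bot, (hb.pre a).hasNF]

namespace IsStaticOp

variable {op : Tm Act → Tm Act → Tm Act}

theorem hasNF (hop : IsStaticOp Act op) (h : ∀ {u v}, NFB u → NFB v → HasNF (op u v))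
    {t₁ t₂ : Tm Act} (h₁ : HasNF t₁) (h₂ : HasNF t₂) : HasNF (op t₁ t₂) := by
  obtain ⟨s₁, hs₁, e₁⟩ := h₁
  obtain ⟨s₂, hs₂, e₂⟩ := h₂
  refine .of_eqv (hop.congr e₁ e₂) ?_
  rcases hs₁ with rfl | hb₁
  · exact .of_eqv (hop.bot_left s₂) .bot
  rcases hs₂ with rfl | hb₂
  · exact .of_eqv (hop.bot_right s₁) .bot
  exact h hb₁ hb₂

theorem hasNF_bigDisj_right (hop : IsStaticOp Act op) (x : Tm Act) :
    ∀ {ts : List (Tm Act)}, ts ≠ [] → (∀ t ∈ ts, HasNF (op x t)) → HasNF (op x (bigDisj ts))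
  | [t], _, h => h t List.mem_cons_self
  | t :: u :: ts, _, h => by
    refine .of_eqv ((hop.congr (.refl x) (bigDisj_cons t (List.cons_ne_nil u ts))).trans
      (hop.distrib _ _ _)) ?_
    exact (h t List.mem_cons_self).disj
      (hasNF_bigDisj_right hop x (List.cons_ne_nil u ts)
        fun v hv => h v (List.mem_cons_of_mem t hv))

theorem hasNF_bigDisj_left (hop : IsStaticOp Act op) (y : Tm Act) {ts : List (Tm Act)}
    (hts : ts ≠ []) (h : ∀ t ∈ ts, HasNF (op t y)) : HasNF (op (bigDisj ts) y) :=
  .of_eqv (hop.comm _ _) (hop.hasNF_bigDisj_right y hts fun t ht => .of_eqv (hop.comm _ _) (h t ht))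

end IsStaticOp

theorem Eqv.pre_ec_pre (a : Act) {x y : Tm Act} (hx : Basic x) (hy : Basic y) :
    Eqv (.ec (.pre (some a) x) (.pre (some a) y)) (.pre (some a) (.disj x y)) :=
  ⟨(Deriv.ec_mono (.pre_mono _ (.di_le x y)) (.pre_mono _ (.le_disj_right x y))).trans
    (.ec_idem1 _), .ds4 a hx hy⟩

theorem exists_nodup_ecPre_cons (a : Act) {y : Tm Act} (hy : NFB y) {l : List (Act × Tm Act)}
    (hnd : (l.map Prod.fst).Nodup) (hb : ∀ p ∈ l, NFB p.2) :
    ∃ l' : List (Act × Tm Act), (l'.map Prod.fst).Nodup ∧ (∀ p ∈ l', NFB p.2) ∧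
      Eqv (.ec (.pre (some a) y) (ecPre l)) (ecPre l') := by
  by_cases ha : a ∈ l.map Prod.fst
  · obtain ⟨⟨a, x⟩, hx, rfl⟩ := List.mem_map.1 ha
    obtain ⟨s, t, rfl⟩ := List.append_of_mem hx
    have hperm : (s ++ (a, x) :: t).Perm ((a, x) :: (s ++ t)) := List.perm_middle
    have hb' : ∀ p ∈ (a, x) :: (s ++ t), NFB p.2 := fun p hp => hb p (hperm.symm.subset hp)
    obtain ⟨z, hz, hyxz⟩ := hy.exists_disj_eqv (hb' _ List.mem_cons_self)
    refine ⟨(a, z) :: (s ++ t), by simpa using (hperm.map Prod.fst).nodup_iff.1 hnd, ?_, ?_⟩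
    · exact List.forall_mem_cons.2 ⟨hz, fun p hp => hb' p (List.mem_cons_of_mem _ hp)⟩
    calc Eqv (.ec (.pre (some a) y) (ecPre (s ++ (a, x) :: t)))
          (.ec (.pre (some a) y) (.ec (.pre (some a) x) (ecPre (s ++ t)))) :=
          (Eqv.refl _).ec ((ecPre_perm hperm).trans (ecPre_cons a x _))
      Eqv _ (.ec (.ec (.pre (some a) y) (.pre (some a) x)) (ecPre (s ++ t))) :=
          (Eqv.ec_assoc _ _ _).symm
      Eqv _ (.ec (.pre (some a) z) (ecPre (s ++ t))) :=
          ((Eqv.pre_ec_pre a hy.basic (hb' _ List.mem_cons_self).basic).trans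
            (hyxz.pre _)).ec (.refl _)
      Eqv _ (ecPre ((a, z) :: (s ++ t))) := (ecPre_cons a z _).symm
  · exact ⟨(a, y) :: l, List.nodup_cons.2 ⟨ha, hnd⟩, List.forall_mem_cons.2 ⟨hy, hb⟩,
      (ecPre_cons a y l).symm⟩

theorem exists_nodup_ecPre : ∀ {l : List (Act × Tm Act)}, (∀ p ∈ l, NFB p.2) →
    ∃ l' : List (Act × Tm Act), (l'.map Prod.fst).Nodup ∧ (∀ p ∈ l', NFB p.2) ∧
      Eqv (ecPre l) (ecPre l')
  | [], _ => ⟨[], List.nodup_nil, by simp, .refl _⟩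
  | (a, y) :: l, hb => by
    obtain ⟨l', hnd', hb', e'⟩ := exists_nodup_ecPre fun p hp => hb p (List.mem_cons_of_mem _ hp)
    obtain ⟨l'', hnd'', hb'', e''⟩ :=
      exists_nodup_ecPre_cons a (hb _ List.mem_cons_self) hnd' hb'
    exact ⟨l'', hnd'', hb'', (ecPre_cons a y l).trans (((Eqv.refl _).ec e').trans e'')⟩

theorem hasNF_ecPre_of_NFB {l : List (Act × Tm Act)} (hb : ∀ p ∈ l, NFB p.2) :
    HasNF (ecPre l) :=
  let ⟨_, hnd', hb', e⟩ := exists_nodup_ecPre hb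
  .of_eqv e (NFB.ecPre hnd' hb').hasNF

theorem NFB.hasNF_ec {u v : Tm Act} (hu : NFB u) (hv : NFB v) : HasNF (.ec u v) := by
  obtain ⟨ls₁, hne₁, -, hb₁⟩ := hu
  obtain ⟨ls₂, hne₂, -, hb₂⟩ := hv
  refine isStaticOp_ec.hasNF_bigDisj_left _ (by simpa using hne₁)
    (List.forall_mem_map.2 fun l₁ hl₁ => ?_)
  refine isStaticOp_ec.hasNF_bigDisj_right _ (by simpa using hne₂)
    (List.forall_mem_map.2 fun l₂ hl₂ => ?_)
  refine .of_eqv (ecPre_append l₁ l₂) (hasNF_ecPre_of_NFB ?_)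
  simpa only [List.forall_mem_append] using ⟨hb₁ l₁ hl₁, hb₂ l₂ hl₂⟩

theorem HasNF.ec {t₁ t₂ : Tm Act} (h₁ : HasNF t₁) (h₂ : HasNF t₂) : HasNF (.ec t₁ t₂) :=
  isStaticOp_ec.hasNF NFB.hasNF_ec h₁ h₂

theorem HasNF.bigEC : ∀ {ts : List (Tm Act)}, (∀ t ∈ ts, HasNF t) → HasNF (bigEC ts)
  | [], _ => NFB.nil.hasNF
  | t :: _, h => .of_eqv (bigEC_cons t _) ((h t List.mem_cons_self).ec
      (HasNF.bigEC fun u hu => h u (List.mem_cons_of_mem t hu)))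

theorem HasNF.ecPre {l : List (Act × Tm Act)} (h : ∀ p ∈ l, HasNF p.2) : HasNF (ecPre l) :=
  HasNF.bigEC (List.forall_mem_map.2 fun p hp => (h p hp).pre _)

theorem exists_zip_of_keys {l₁ l₂ : List (Act × Tm Act)} (hnd₁ : (l₁.map Prod.fst).Nodup)
    (hnd₂ : (l₂.map Prod.fst).Nodup) (hkeys : ∀ a, a ∈ l₁.map Prod.fst ↔ a ∈ l₂.map Prod.fst) :
    ∃ L : List (Act × Tm Act × Tm Act),
      L.map (fun p => (p.1, p.2.1)) = l₁ ∧ (L.map fun p => (p.1, p.2.2)).Perm l₂ := by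
  have hval : ∀ a ∈ l₂.map Prod.fst, ∃ y, (a, y) ∈ l₂ := by simp
  have : Nonempty (Tm Act) := ⟨.nil⟩
  choose! f hf using hval
  refine ⟨l₁.map fun p => (p.1, p.2, f p.1), by simp [Function.comp_def], ?_⟩
  have hnd' : (l₁.map fun p => (p.1, f p.1)).Nodup :=
    List.Nodup.of_map Prod.fst (by simpa [Function.comp_def] using hnd₁)
  simp only [List.map_map, Function.comp_def]
  rw [List.perm_ext_iff_of_nodup hnd' (hnd₂.of_map Prod.fst)]
  rintro ⟨a, y⟩
  simp only [List.mem_map, Prod.mk.injEq]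
  constructor
  · rintro ⟨p, hp, rfl, rfl⟩
    exact hf _ ((hkeys _).1 (List.mem_map_of_mem hp))
  · intro hay
    have ha : a ∈ l₂.map Prod.fst := List.mem_map_of_mem (f := Prod.fst) hay
    obtain ⟨p, hp, rfl⟩ := List.mem_map.1 ((hkeys a).2 ha)
    exact ⟨p, hp, rfl, congrArg Prod.snd (List.inj_on_of_nodup_map hnd₂ (hf _ ha) hay rfl)⟩

theorem hasNF_conj_ecPre {l₁ l₂ : List (Act × Tm Act)} (hnd₁ : (l₁.map Prod.fst).Nodup)
    (hnd₂ : (l₂.map Prod.fst).Nodup) (h : ∀ p ∈ l₁, ∀ q ∈ l₂, HasNF (.conj p.2 q.2)) :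
    HasNF (.conj (ecPre l₁) (ecPre l₂)) := by
  by_cases hkeys : ∀ a, a ∈ l₁.map Prod.fst ↔ a ∈ l₂.map Prod.fst
  · obtain ⟨L, rfl, hL⟩ := exists_zip_of_keys hnd₁ hnd₂ hkeys
    have hndL : (L.map Prod.fst).Nodup := by simpa [List.map_map, Function.comp_def] using hnd₁
    refine .of_eqv ((Eqv.refl _).conj (ecPre_perm hL).symm) (.of_eqv ⟨.ecc3 L hndL, .ecc2 L⟩ ?_)
    refine HasNF.ecPre (List.forall_mem_map.2 fun p hp => ?_)
    exact h _ (List.mem_map_of_mem hp) _ (hL.subset (List.mem_map_of_mem hp))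
  · refine ⟨.bot, Or.inl rfl, .ecc1a l₁ l₂ ?_, .ecc1b l₁ l₂ ?_⟩ <;>
      exact fun heq => hkeys fun a => Set.ext_iff.1 heq a

theorem NFB.hasNF_conj {u v : Tm Act} (hu : NFB u) (hv : NFB v) : HasNF (.conj u v) := by
  induction hu generalizing v with
  | mk ls₁ hne₁ hnd₁ _ ih =>
  obtain ⟨ls₂, hne₂, hnd₂, hb₂⟩ := hv
  refine isStaticOp_conj.hasNF_bigDisj_left _ (by simpa using hne₁)
    (List.forall_mem_map.2 fun l₁ hl₁ => ?_)
  refine isStaticOp_conj.hasNF_bigDisj_right _ (by simpa using hne₂)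
    (List.forall_mem_map.2 fun l₂ hl₂ => ?_)
  exact hasNF_conj_ecPre (hnd₁ l₁ hl₁) (hnd₂ l₂ hl₂)
    fun p hp q hq => ih l₁ hl₁ p hp (hb₂ l₂ hl₂ q hq)

theorem HasNF.conj {t₁ t₂ : Tm Act} (h₁ : HasNF t₁) (h₂ : HasNF t₂) : HasNF (.conj t₁ t₂) :=
  isStaticOp_conj.hasNF NFB.hasNF_conj h₁ h₂

theorem hasNF_par_ecPre (A : Set Act) {l₁ l₂ : List (Act × Tm Act)}
    (hB₁ : ∀ p ∈ l₁, Basic p.2) (hB₂ : ∀ q ∈ l₂, Basic q.2)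
    (h₁ : ∀ p ∈ l₁, HasNF (.par A p.2 (ecPre l₂)))
    (h₂ : ∀ q ∈ l₂, HasNF (.par A (ecPre l₁) q.2))
    (h₁₂ : ∀ p ∈ l₁, ∀ q ∈ l₂, HasNF (.par A p.2 q.2)) :
    HasNF (.par A (ecPre l₁) (ecPre l₂)) := by
  refine .of_eqv ⟨.exp1 A l₁ l₂ hB₁ hB₂, .exp2 A l₁ l₂ hB₁ hB₂⟩ ?_
  refine .ec (.ec (.bigEC ?_) (.bigEC ?_)) (.bigEC ?_) <;> simp only [List.forall_mem_map]
  · exact fun p hp => (h₁ p (List.mem_filter.1 hp).1).pre _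
  · exact fun q hq => (h₂ q (List.mem_filter.1 hq).1).pre _
  · intro pq hpq
    obtain ⟨hp, hq⟩ := List.mem_product.1 (List.mem_filter.1 hpq).1
    exact (h₁₂ _ hp _ hq).pre _

theorem hasNF_par_ecPre_left (A : Set Act) {l₁ : List (Act × Tm Act)} (hb₁ : ∀ p ∈ l₁, NFB p.2)
    (ih : ∀ p ∈ l₁, ∀ {v}, NFB v → HasNF (.par A p.2 v)) {v : Tm Act} (hv : NFB v) :
    HasNF (.par A (ecPre l₁) v) := by
  induction hv with
  | mk ls₂ hne₂ hnd₂ hb₂ ih₂ =>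
  refine (isStaticOp_par A).hasNF_bigDisj_right _ (by simpa using hne₂)
    (List.forall_mem_map.2 fun l₂ hl₂ => ?_)
  exact hasNF_par_ecPre A (fun p hp => (hb₁ p hp).basic) (fun q hq => (hb₂ l₂ hl₂ q hq).basic)
    (fun p hp => ih p hp (NFB.ecPre (hnd₂ l₂ hl₂) (hb₂ l₂ hl₂))) (ih₂ l₂ hl₂)
    (fun p hp q hq => ih p hp (hb₂ l₂ hl₂ q hq))

theorem NFB.hasNF_par (A : Set Act) {u v : Tm Act} (hu : NFB u) (hv : NFB v) :
    HasNF (.par A u v) := by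
  induction hu generalizing v with
  | mk ls₁ hne₁ _ hb₁ ih =>
  refine (isStaticOp_par A).hasNF_bigDisj_left _ (by simpa using hne₁)
    (List.forall_mem_map.2 fun l₁ hl₁ => ?_)
  exact hasNF_par_ecPre_left A (hb₁ l₁ hl₁) (ih l₁ hl₁) hv

theorem HasNF.par (A : Set Act) {t₁ t₂ : Tm Act} (h₁ : HasNF t₁) (h₂ : HasNF t₂) :
    HasNF (.par A t₁ t₂) :=
  (isStaticOp_par A).hasNF (NFB.hasNF_par A) h₁ h₂

theorem hasNF : ∀ t : Tm Act, HasNF t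
  | .nil => NFB.nil.hasNF
  | .bot => .bot
  | .pre α t => (hasNF t).pre α
  | .ec t₁ t₂ => (hasNF t₁).ec (hasNF t₂)
  | .conj t₁ t₂ => (hasNF t₁).conj (hasNF t₂)
  | .disj t₁ t₂ => (hasNF t₁).disj (hasNF t₂)
  | .par A t₁ t₂ => (hasNF t₁).par A (hasNF t₂)

end CLL

/-- Normal Form Theorem: every term is provably equal in
`AX_CLL` to a term in normal form. -/
theorem stmt18 (Act : Type) :
    ∀ t : CLL.Tm Act, ∃ s : CLL.Tm Act, CLL.NF s ∧ CLL.Deriv t s ∧ CLL.Deriv s t := fun t =>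
  let ⟨s, hs, e⟩ := CLL.hasNF t
  ⟨s, hs, e⟩
end
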